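/- Suppose the open set condition holds. Then the Hausdorff dimension of the statistically self-similar set E satisfies dim(E) ≤ s, where s is the unique number such that liminf_{k→∞} ∑_{(j_1,…,j_k) ∈ L^k} (r_{j_1}⋯r_{j_k})^t equals ∞ for t < s and 0 for t > s. -/

import Mathlib

/-! A closed ball `F` that every `ψ_j` maps into itself exists because the `ψ_j` are
contractions. The sets `ψ^k(F)` then decrease, so their Hausdorff limit `E` lies in each of them:
`E` is covered by the pieces `F_{j_1…j_k}`, of diameter at most `r_{j_1}⋯r_{j_k} diam F`, whence
`μH[t](E) ≤ diam(F)^t · liminf_k ∑_{L^k} (r_{j_1}⋯r_{j_k})^t = 0` for every `t > s`. -/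

open Metric Filter Set

/-- The composition `ψ_{j 0} ∘ ψ_{j 1} ∘ ⋯ ∘ ψ_{j (k-1)}`. -/
noncomputable def iterMap {X : Type*} {m : ℕ} (ψ : Fin m → X → X) :
    (k : ℕ) → (Fin k → Fin m) → X → X
  | 0, _ => id
  | k + 1, j => ψ (j 0) ∘ iterMap ψ k (fun i => j i.succ)

/-- The index set `L^k = N_1 × ⋯ × N_k`, realized as the finset of functions
`j : Fin k → Fin m` whose `i`-th component lies in `N (i+1)`. -/
def Lk {m : ℕ} (N : ℕ → Finset (Fin m)) (k : ℕ) : Finset (Fin k → Fin m) :=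
  Finset.univ.filter fun j => ∀ i : Fin k, j i ∈ N (i + 1)

/-- `ψ^k(F) = ⋃_{(j_1,…,j_k) ∈ L^k} (ψ_{j_1} ∘ ⋯ ∘ ψ_{j_k})(F)`. -/
noncomputable def psiImage {X : Type*} {m : ℕ} (ψ : Fin m → X → X)
    (N : ℕ → Finset (Fin m)) (k : ℕ) (F : Set X) : Set X :=
  ⋃ j ∈ Lk N k, iterMap ψ k j '' F

open scoped ENNReal NNReal

section Iteration

variable {X : Type*} {m : ℕ} {ψ : Fin m → X → X} {N : ℕ → Finset (Fin m)} {F : Set X}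

theorem mem_Lk {k : ℕ} {j : Fin k → Fin m} : j ∈ Lk N k ↔ ∀ i : Fin k, j i ∈ N (i + 1) := by
  simp [Lk]

theorem Lk_nonempty (hN : ∀ k, 1 ≤ k → (N k).Nonempty) (k : ℕ) : (Lk N k).Nonempty := by
  choose j hj using fun i : Fin k => hN (i + 1) (Nat.le_add_left 1 i)
  exact ⟨j, mem_Lk.2 hj⟩

theorem iterMap_succ' (k : ℕ) (j : Fin (k + 1) → Fin m) :
    iterMap ψ (k + 1) j = iterMap ψ k (fun i => j i.castSucc) ∘ ψ (j (Fin.last k)) := by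
  induction k with
  | zero => rfl
  | succ k ih =>
    funext x
    have h := congrFun (ih fun i => j i.succ) x
    simp only [iterMap, Function.comp_apply] at h ⊢
    rw [h]
    simp only [Fin.succ_last, Fin.castSucc_zero, Fin.succ_castSucc]

theorem continuous_iterMap [TopologicalSpace X] (hψ : ∀ j, Continuous (ψ j)) :
    ∀ k j, Continuous (iterMap ψ k j)
  | 0, _ => continuous_id
  | k + 1, j => (hψ (j 0)).comp (continuous_iterMap hψ k _)

theorem lipschitzWith_iterMap [PseudoEMetricSpace X] {K : Fin m → ℝ≥0}
    (hψ : ∀ j, LipschitzWith (K j) (ψ j)) :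
    ∀ k j, LipschitzWith (∏ i, K (j i)) (iterMap ψ k j)
  | 0, _ => by simpa [iterMap] using LipschitzWith.id
  | k + 1, j => by
    rw [Fin.prod_univ_succ]
    exact (hψ (j 0)).comp (lipschitzWith_iterMap hψ k _)

theorem psiImage_nonempty (hN : ∀ k, 1 ≤ k → (N k).Nonempty) (hF : F.Nonempty) (k : ℕ) :
    (psiImage ψ N k F).Nonempty := by
  obtain ⟨j, hj⟩ := Lk_nonempty hN k
  obtain ⟨x, hx⟩ := hF
  exact ⟨iterMap ψ k j x, mem_biUnion hj (mem_image_of_mem _ hx)⟩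

theorem isCompact_psiImage [TopologicalSpace X] (hψ : ∀ j, Continuous (ψ j)) (hF : IsCompact F)
    (k : ℕ) : IsCompact (psiImage ψ N k F) :=
  (Lk N k).finite_toSet.isCompact_biUnion fun j _ => hF.image (continuous_iterMap hψ k j)

theorem antitone_psiImage (hF : ∀ j, MapsTo (ψ j) F F) : Antitone fun k => psiImage ψ N k F := by
  refine antitone_nat_of_succ_le fun k x hx => ?_
  obtain ⟨j, hj, y, hy, rfl⟩ := by
    simpa only [psiImage, mem_iUnion, exists_prop, mem_image] using hx
  have hj' : (fun i : Fin k => j i.castSucc) ∈ Lk N k :=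
    mem_Lk.2 fun i => by simpa using mem_Lk.1 hj i.castSucc
  rw [iterMap_succ']
  exact mem_biUnion hj' (mem_image_of_mem _ (hF _ hy))

end Iteration

section Metric

variable {X : Type*}

theorem lipschitzWith_toNNReal_of_dist_eq_mul [PseudoMetricSpace X] {f : X → X} {r : ℝ}
    (hf : ∀ x y, dist (f x) (f y) = r * dist x y) : LipschitzWith r.toNNReal f :=
  LipschitzWith.of_dist_le_mul fun x y => by
    rw [hf, Real.coe_toNNReal']
    gcongr
    exact le_max_left r 0

theorem nonneg_of_dist_eq_mul [MetricSpace X] [Nontrivial X] {f : X → X} {r : ℝ}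
    (hf : ∀ x y, dist (f x) (f y) = r * dist x y) : 0 ≤ r := by
  obtain ⟨x, y, hxy⟩ := exists_pair_ne X
  exact nonneg_of_mul_nonneg_left (hf x y ▸ dist_nonneg) (dist_pos.2 hxy)

theorem LipschitzWith.mapsTo_closedBall_self [PseudoMetricSpace X] {f : X → X} {K : ℝ≥0}
    (hf : LipschitzWith K f) {p : X} {R : ℝ} (h : dist (f p) p ≤ (1 - K) * R) :
    MapsTo f (closedBall p R) (closedBall p R) := fun x hx =>
  calc dist (f x) p ≤ dist (f x) (f p) + dist (f p) p := dist_triangle _ _ _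
    _ ≤ K * dist x p + (1 - K) * R := add_le_add (hf.dist_le_mul x p) h
    _ ≤ K * R + (1 - K) * R := by gcongr; exact hx
    _ = R := by ring

theorem exists_closedBall_mapsTo [PseudoMetricSpace X] {ι : Type*} [Fintype ι] {f : ι → X → X}
    {K : ℝ≥0} (hf : ∀ i, LipschitzWith K (f i)) (hK : K < 1) (p : X) :
    ∃ R ≥ 0, ∀ i, MapsTo (f i) (closedBall p R) (closedBall p R) := by
  set D := ∑ i, dist (f i p) p
  have hK' : 0 < 1 - (K : ℝ) := sub_pos.2 (by exact_mod_cast hK)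
  refine ⟨D / (1 - K), by positivity, fun i => (hf i).mapsTo_closedBall_self ?_⟩
  calc dist (f i p) p ≤ D :=
        Finset.single_le_sum (f := fun i => dist (f i p) p) (fun i _ => dist_nonneg)
          (Finset.mem_univ i)
    _ = (1 - K) * (D / (1 - K)) := by field_simp

theorem subset_of_tendsto_hausdorffDist [PseudoMetricSpace X] {A : ℕ → Set X} {E : Set X}
    (hA : Antitone A) (hAc : ∀ k, IsClosed (A k)) (hAne : ∀ k, (A k).Nonempty)
    (hAb : ∀ k, Bornology.IsBounded (A k)) (hE : Bornology.IsBounded E)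
    (hlim : Tendsto (fun k => hausdorffDist (A k) E) atTop (nhds 0)) (k : ℕ) : E ⊆ A k := by
  intro x hx
  have hle : ∀ k' ≥ k, infDist x (A k) ≤ hausdorffDist (A k') E := fun k' hk' =>
    calc infDist x (A k) ≤ infDist x (A k') := infDist_le_infDist_of_subset (hA hk') (hAne k')
      _ ≤ hausdorffDist E (A k') := infDist_le_hausdorffDist_of_mem hx
          (hausdorffEDist_ne_top_of_nonempty_of_bounded ⟨x, hx⟩ (hAne k') hE (hAb k'))
      _ = hausdorffDist (A k') E := hausdorffDist_comm
  have hzero : infDist x (A k) ≤ 0 := ge_of_tendsto hlim (eventually_atTop.2 ⟨k, hle⟩)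
  exact ((hAc k).mem_iff_infDist_zero (hAne k)).2 (le_antisymm hzero infDist_nonneg)

end Metric

section HausdorffMeasure

open MeasureTheory

variable {X : Type*} [EMetricSpace X] [MeasurableSpace X] [BorelSpace X]

theorem hausdorffMeasure_eq_zero_of_subset_psiImage {m : ℕ} {ψ : Fin m → X → X}
    {K : Fin m → ℝ≥0} {ρ : ℝ≥0} (hψ : ∀ j, LipschitzWith (K j) (ψ j)) (hKρ : ∀ j, K j ≤ ρ)
    (hρ : ρ < 1) {N : ℕ → Finset (Fin m)} {E F : Set X} (hF : ediam F ≠ ⊤)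
    (hE : ∀ k, E ⊆ psiImage ψ N k F) {t : ℝ} (ht : 0 < t)
    (hsum : liminf (fun k => ∑ j ∈ Lk N k, ((∏ i, K (j i) : ℝ≥0) : ℝ≥0∞) ^ t) atTop = 0) :
    μH[t] E = 0 := by
  set piece : ∀ k, Lk N k → Set X := fun k j => iterMap ψ k j '' F
  have hdiam : ∀ k (j : Lk N k), ediam (piece k j) ≤ ((∏ i, K (j.1 i) : ℝ≥0) : ℝ≥0∞) * ediam F :=
    fun k j => (lipschitzWith_iterMap hψ k j).ediam_image_le F
  have hprod : ∀ k (j : Fin k → Fin m), ∏ i, K (j i) ≤ ρ ^ k := fun k j => by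
    simpa using Finset.prod_le_pow_card Finset.univ (fun i => K (j i)) ρ fun i _ => hKρ (j i)
  have hsmall : Tendsto (fun k : ℕ => (ρ : ℝ≥0∞) ^ k * ediam F) atTop (nhds 0) := by
    simpa using ENNReal.Tendsto.mul_const
      (ENNReal.tendsto_pow_atTop_nhds_zero_of_lt_one (ENNReal.coe_lt_one_iff.2 hρ)) (Or.inr hF)
  have hcover : ∀ k, E ⊆ ⋃ j : Lk N k, piece k j := fun k x hx => by
    obtain ⟨j, hj, hxj⟩ := by simpa only [psiImage, mem_iUnion, exists_prop] using hE k hx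
    exact mem_iUnion.2 ⟨⟨j, hj⟩, hxj⟩
  refine le_antisymm ?_ zero_le
  calc μH[t] E ≤ liminf (fun k => ∑ j : Lk N k, ediam (piece k j) ^ t) atTop :=
        Measure.hausdorffMeasure_le_liminf_sum t E _ hsmall piece
          (Eventually.of_forall fun k j => (hdiam k j).trans (by gcongr; exact_mod_cast hprod k j))
          (Eventually.of_forall hcover)
    _ ≤ liminf (fun k => (∑ j ∈ Lk N k, ((∏ i, K (j i) : ℝ≥0) : ℝ≥0∞) ^ t) * ediam F ^ t)
          atTop := by
        refine liminf_le_liminf (Eventually.of_forall fun k => ?_)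
        rw [Finset.sum_mul, ← Finset.sum_coe_sort (Lk N k)]
        refine Finset.sum_le_sum fun j _ => ?_
        rw [← ENNReal.mul_rpow_of_nonneg _ _ ht.le]
        exact ENNReal.rpow_le_rpow (hdiam k j) ht.le
    _ = 0 := by
        rw [ENNReal.liminf_mul_const_of_ne_top (ENNReal.rpow_ne_top_of_nonneg ht.le hF), hsum,
          mul_zero]

theorem dimH_le_ofReal_of_hausdorffMeasure_eq_zero {E : Set X} {s : ℝ}
    (h : ∀ t : ℝ, 0 < t → s < t → μH[t] E = 0) : dimH E ≤ ENNReal.ofReal s := by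
  refine dimH_le fun d hd => le_of_not_gt fun hsd => ?_
  rw [← ENNReal.ofReal_coe_nnreal, ENNReal.ofReal_lt_ofReal_iff'] at hsd
  simp [h d hsd.2 hsd.1] at hd

end HausdorffMeasure

open MeasureTheory in
theorem stmt9_general {n m : ℕ}
    (ψ : Fin m → EuclideanSpace ℝ (Fin n) → EuclideanSpace ℝ (Fin n)) (r : Fin m → ℝ)
    (hψ : ∀ j x y, dist (ψ j x) (ψ j y) = r j * dist x y) (hr : ∀ j, r j < 1)
    (N : ℕ → Finset (Fin m)) (hN : ∀ k, 1 ≤ k → (N k).Nonempty)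
    (E : Set (EuclideanSpace ℝ (Fin n))) (hE : IsCompact E)
    (hconv : ∀ F : Set (EuclideanSpace ℝ (Fin n)), IsCompact F → F.Nonempty →
      Tendsto (fun k => hausdorffDist (psiImage ψ N k F) E) atTop (nhds 0))
    (s : ℝ)
    (hsgt : ∀ t : ℝ, s < t →
      liminf (fun k => ∑ j ∈ Lk N k, ENNReal.ofReal ((∏ i, r (j i)) ^ t)) atTop = 0) :
    dimH E ≤ ENNReal.ofReal s := by
  -- on the one-point space `hψ` does not force `0 ≤ r j`
  rcases subsingleton_or_nontrivial (EuclideanSpace ℝ (Fin n)) with _ | _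
  · simp [dimH_subsingleton Set.subsingleton_of_subsingleton]
  have hlip : ∀ j, LipschitzWith (r j).toNNReal (ψ j) :=
    fun j => lipschitzWith_toNNReal_of_dist_eq_mul (hψ j)
  set ρ := Finset.univ.sup fun j => (r j).toNNReal
  have hρ : ρ < 1 := (Finset.sup_lt_iff one_pos).2 fun j _ => Real.toNNReal_lt_one.2 (hr j)
  have hKρ : ∀ j, (r j).toNNReal ≤ ρ :=
    fun j => Finset.le_sup (f := fun j => (r j).toNNReal) (Finset.mem_univ j)
  obtain ⟨R, hR, hinv⟩ := exists_closedBall_mapsTo (fun j => (hlip j).weaken (hKρ j)) hρ 0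
  set F := closedBall (0 : EuclideanSpace ℝ (Fin n)) R
  have hFc : IsCompact F := isCompact_closedBall 0 R
  have hFne : F.Nonempty := nonempty_closedBall.2 hR
  have hcompact := isCompact_psiImage (N := N) (fun j => (hlip j).continuous) hFc
  have hcover := subset_of_tendsto_hausdorffDist (antitone_psiImage hinv)
    (fun k => (hcompact k).isClosed) (psiImage_nonempty hN hFne) (fun k => (hcompact k).isBounded)
    hE.isBounded (hconv F hFc hFne)
  have hr0 : ∀ j, 0 ≤ r j := fun j => nonneg_of_dist_eq_mul (hψ j)
  have hterm : ∀ {k} (j : Fin k → Fin m) {t : ℝ}, 0 ≤ t →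
      ((∏ i, (r (j i)).toNNReal : ℝ≥0) : ℝ≥0∞) ^ t = ENNReal.ofReal ((∏ i, r (j i)) ^ t) :=
    fun j t ht => by
      rw [← ENNReal.ofReal_rpow_of_nonneg (Finset.prod_nonneg fun i _ => hr0 _) ht,
        ENNReal.ofReal_prod_of_nonneg fun i _ => hr0 _, ENNReal.ofNNReal_finsetProd]
      rfl
  refine dimH_le_ofReal_of_hausdorffMeasure_eq_zero fun t ht hst => ?_
  refine hausdorffMeasure_eq_zero_of_subset_psiImage hlip hKρ hρ isBounded_closedBall.ediam_ne_top
    hcover ht ?_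
  simpa only [hterm _ ht.le] using hsgt t hst

open MeasureTheory in
/-- Under the open set condition, the Hausdorff dimension of the statistically
self-similar set `E` satisfies `dim E ≤ s`. -/
theorem stmt9 {n m : ℕ}
    (ψ : Fin m → EuclideanSpace ℝ (Fin n) → EuclideanSpace ℝ (Fin n)) (r : Fin m → ℝ)
    (hψ : ∀ j x y, dist (ψ j x) (ψ j y) = r j * dist x y) (hr : ∀ j, r j < 1)
    (N : ℕ → Finset (Fin m)) (hN : ∀ k, 1 ≤ k → (N k).Nonempty)
    (V : Set (EuclideanSpace ℝ (Fin n))) (hVo : IsOpen V)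
    (hVb : Bornology.IsBounded V) (hVne : V.Nonempty)
    (hmap : ∀ j, ψ j '' V ⊆ V)
    (hdisj : ∀ i j, i ≠ j → Disjoint (ψ i '' V) (ψ j '' V))
    (E : Set (EuclideanSpace ℝ (Fin n))) (hE : IsCompact E) (hEne : E.Nonempty)
    (hconv : ∀ F : Set (EuclideanSpace ℝ (Fin n)), IsCompact F → F.Nonempty →
      Tendsto (fun k => hausdorffDist (psiImage ψ N k F) E) atTop (nhds 0))
    (s : ℝ) (hs0 : 0 ≤ s)
    (hslt : ∀ t : ℝ, 0 ≤ t → t < s →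
      liminf (fun k => ∑ j ∈ Lk N k, ENNReal.ofReal ((∏ i, r (j i)) ^ t)) atTop = ⊤)
    (hsgt : ∀ t : ℝ, s < t →
      liminf (fun k => ∑ j ∈ Lk N k, ENNReal.ofReal ((∏ i, r (j i)) ^ t)) atTop = 0) :
    dimH E ≤ ENNReal.ofReal s :=
  stmt9_general ψ r hψ hr N hN E hE hconv s hsgt
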